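/- arXiv:math/0506452 — 4 statements merged into one kernel-verified Lean document; each statement's English description precedes it below -/
import Mathlib

section
/- Let A be a commutative differential graded algebra over ℝ. Let α, β₁, β₂, β₃ be closed elements of degree 2 and ξ₁, ξ₂, ξ₃ elements of degree 3 with d ξᵢ = α · βᵢ for i = 1,2,3. Then the degree-8 element ξ₁·ξ₂·β₃ + ξ₂·ξ₃·β₁ + ξ₃·ξ₁·β₂ is closed (its differential is zero). -/
/-- In a commutative DGA over ℝ, if α, β₁, β₂, β₃ are closed of degree 2
(hence central, and with `d` satisfying the even Leibniz rule), and ξ₁, ξ₂, ξ₃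
have degree 3 (hence pairwise anticommuting, odd Leibniz rule) with
d ξᵢ = α·βᵢ, then ξ₁ξ₂β₃ + ξ₂ξ₃β₁ + ξ₃ξ₁β₂ is closed. -/
theorem stmt_0 (A : Type*) [Ring A] [Algebra ℝ A]
    (d : A →ₗ[ℝ] A)
    (α : A) (β ξ : Fin 3 → A)
    (hαc : ∀ x, α * x = x * α)
    (hβc : ∀ i x, β i * x = x * β i)
    (hξanti : ∀ i j, ξ i * ξ j = -(ξ j * ξ i))
    (hdα : d α = 0) (hdβ : ∀ i, d (β i) = 0)
    (hdξ : ∀ i, d (ξ i) = α * β i)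
    (hLα : ∀ y, d (α * y) = d α * y + α * d y)
    (hLβ : ∀ i y, d (β i * y) = d (β i) * y + β i * d y)
    (hLξ : ∀ i y, d (ξ i * y) = d (ξ i) * y - ξ i * d y) :
    d (ξ 0 * ξ 1 * β 2 + ξ 1 * ξ 2 * β 0 + ξ 2 * ξ 0 * β 1) = 0 := by
  have cent : ∀ (i : Fin 3) (x : A), (α * β i) * x = x * (α * β i) := by
    intro i x
    rw [mul_assoc, hβc, ← mul_assoc, hαc, mul_assoc]
  have h : ∀ i j k : Fin 3,
      d (ξ i * ξ j * β k) = ξ j * (α * (β i * β k)) - ξ i * (α * (β j * β k)) := by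
    intro i j k
    rw [mul_assoc, hLξ, hdξ, show ξ j * β k = β k * ξ j from (hβc k _).symm, hLβ,
      hdβ, hdξ, zero_mul, zero_add]
    have h1 : α * β i * (ξ j * β k) = ξ j * (α * (β i * β k)) := by
      rw [cent, mul_assoc, show β k * (α * β i) = α * (β i * β k) from by
        rw [hβc k, mul_assoc]]
    have h2 : β k * (α * β j) = α * (β j * β k) := by rw [hβc k, mul_assoc]
    rw [show β k * ξ j = ξ j * β k from hβc k _, h1, h2]
  rw [map_add, map_add, h, h, h, show β 1 * β 0 = β 0 * β 1 from hβc 1 (β 0),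
    show β 2 * β 1 = β 1 * β 2 from hβc 2 (β 1), show β 2 * β 0 = β 0 * β 2 from hβc 2 (β 0)]
  abel
end

section
/- In the free graded-commutative algebra ⋀(α₁,α₂,β₁,β₂,γ₁,γ₂,η₁,η₂) on eight degree-1 generators with differential d determined by dαᵢ = dβᵢ = dγᵢ = 0, dη₁ = −β₁γ₁ + β₂γ₁ + β₁γ₂ + 2β₂γ₂, dη₂ = 2β₁γ₁ + β₂γ₁ + β₁γ₂ − β₂γ₂, the degree-2 element ω = α₁α₂ + η₂β₁ − η₁β₂ + γ₁γ₂ satisfies dω = 0 and ω⁴ ≠ 0. -/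
/-- The degree-1 generators α₁,α₂,β₁,β₂,γ₁,γ₂,η₁,η₂ of the free
graded-commutative algebra on eight degree-1 generators, realized as the
exterior algebra of ℝ⁸ (indices 0,…,7 in that order). -/
noncomputable def gen (i : Fin 8) : ExteriorAlgebra ℝ (Fin 8 → ℝ) :=
  ExteriorAlgebra.ι ℝ (Pi.single i 1)

/-!
The four summands α₁α₂, η₂β₁, -η₁β₂, γ₁γ₂ of ω are products of two degree-1 elements, hence
pairwise commuting and of square zero, so the multinomial expansion collapses to
ω⁴ = 4! · α₁α₂ η₂β₁ (-η₁β₂) γ₁γ₂. Up to sign this is the wedge of the eight standard basis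
vectors in some order, which is nonzero. Closedness is a cancellation:
by the Leibniz rule dω = dη₂ β₁ - dη₁ β₂, and both products equal β₂γ₁β₁ - β₂γ₂β₁.
-/

open ExteriorAlgebra

theorem Commute.add_pow_succ_of_mul_self_eq_zero {R : Type*} [Semiring R] {x y : R}
    (h : Commute x y) (hx : x * x = 0) (n : ℕ) :
    (x + y) ^ (n + 1) = y ^ (n + 1) + (n + 1) • (x * y ^ n) := by
  induction n with
  | zero => simp [add_comm]
  | succ n ih =>
    have hxyx : x * y ^ n * x = 0 := by
      rw [mul_assoc, ← (h.pow_right n).eq, ← mul_assoc, hx, zero_mul]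
    rw [pow_succ, ih, add_mul, mul_add, mul_add, smul_mul_assoc, smul_mul_assoc, hxyx, smul_zero,
      ← (h.pow_right (n + 1)).eq, ← pow_succ, mul_assoc, ← pow_succ, succ_nsmul _ (n + 1)]
    abel

section SquareZero

variable {R : Type*} [Semiring R]

theorem List.sum_pow_length_succ_eq_zero {l : List R} (hcomm : l.Pairwise Commute)
    (hsq : ∀ x ∈ l, x * x = 0) : l.sum ^ (l.length + 1) = 0 := by
  induction l with
  | nil => simp
  | cons a l ih =>
    rw [List.pairwise_cons] at hcomm
    have hl := ih hcomm.2 fun x hx => hsq x (List.mem_cons_of_mem a hx)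
    rw [List.sum_cons, List.length_cons,
      (Commute.list_sum_right a l hcomm.1).add_pow_succ_of_mul_self_eq_zero (hsq a (by simp)),
      pow_succ, hl, zero_mul, mul_zero, smul_zero, add_zero]

theorem List.sum_pow_length_eq_factorial_smul_prod {l : List R} (hcomm : l.Pairwise Commute)
    (hsq : ∀ x ∈ l, x * x = 0) : l.sum ^ l.length = l.length.factorial • l.prod := by
  induction l with
  | nil => simp
  | cons a l ih =>
    rw [List.pairwise_cons] at hcomm
    have hsq' : ∀ x ∈ l, x * x = 0 := fun x hx => hsq x (List.mem_cons_of_mem a hx)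
    rw [List.sum_cons, List.length_cons,
      (Commute.list_sum_right a l hcomm.1).add_pow_succ_of_mul_self_eq_zero (hsq a (by simp)),
      List.sum_pow_length_succ_eq_zero hcomm.2 hsq', ih hcomm.2 hsq', zero_add, mul_smul_comm,
      smul_smul, List.prod_cons, Nat.factorial_succ]

end SquareZero

namespace ExteriorAlgebra

section

variable {R M : Type*} [CommRing R] [AddCommGroup M] [Module R M]

theorem ι_mul_ι_swap (u v : M) : ι R v * ι R u = -(ι R u * ι R v) :=
  eq_neg_of_add_eq_zero_left (ι_add_mul_swap v u)

theorem commute_ι_mul_ι_ι (u v w : M) : Commute (ι R u * ι R v) (ι R w) := by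
  rw [Commute, SemiconjBy, mul_assoc, ι_mul_ι_swap w v, mul_neg, ← mul_assoc, ι_mul_ι_swap w u,
    neg_mul, neg_neg, mul_assoc]

theorem commute_ι_mul_ι (u v w x : M) : Commute (ι R u * ι R v) (ι R w * ι R x) :=
  (commute_ι_mul_ι_ι u v w).mul_right (commute_ι_mul_ι_ι u v x)

theorem ι_mul_ι_mul_ι_self (u v : M) : ι R u * ι R v * ι R u = 0 := by
  rw [(commute_ι_mul_ι_ι u v u).eq, ← mul_assoc, ι_sq_zero, zero_mul]

theorem ι_mul_ι_mul_self (u v : M) : ι R u * ι R v * (ι R u * ι R v) = 0 := by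
  rw [← mul_assoc, ι_mul_ι_mul_ι_self, zero_mul]

theorem ι_mul_ι_mul_ι_rev (u v w : M) : ι R u * ι R v * ι R w = -(ι R w * ι R v * ι R u) := by
  rw [(commute_ι_mul_ι_ι u v w).eq, ι_mul_ι_swap v u, mul_neg, mul_assoc]

end

theorem ιMulti_ne_zero_of_linearIndependent {K E : Type*} [Field K] [AddCommGroup E]
    [Module K E] {n : ℕ} {v : Fin n → E} (hv : LinearIndependent K v) : ιMulti K n v ≠ 0 := by
  have := (exteriorPower.ιMulti_family_linearIndependent_field (n := n) hv).ne_zero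
    (Set.powersetCard.ofFinEmbEquiv (OrderIso.refl (Fin n)).toOrderEmbedding)
  rw [← exteriorPower.ιMulti_apply_coe, ne_eq, Submodule.coe_eq_zero]
  simpa [exteriorPower.ιMulti_family] using this

end ExteriorAlgebra

theorem gen_mul_gen_mul_gen_self (i j : Fin 8) : gen i * gen j * gen i = 0 :=
  ι_mul_ι_mul_ι_self _ _

theorem gen_mul_gen_mul_gen_rev (i j k : Fin 8) :
    gen i * gen j * gen k = -(gen k * gen j * gen i) :=
  ι_mul_ι_mul_ι_rev _ _ _

theorem omega_pow_four_ne_zero :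
    (gen 0 * gen 1 + gen 7 * gen 2 - gen 6 * gen 3 + gen 4 * gen 5) ^ 4 ≠ 0 := by
  set terms := [gen 0 * gen 1, gen 7 * gen 2, -(gen 6 * gen 3), gen 4 * gen 5]
  have hsum : gen 0 * gen 1 + gen 7 * gen 2 - gen 6 * gen 3 + gen 4 * gen 5 = terms.sum := by
    simp [terms, sub_eq_add_neg, add_assoc]
  have hprod : terms.prod = -ιMulti ℝ 8 (Pi.basisFun ℝ (Fin 8) ∘ ![0, 1, 7, 2, 6, 3, 4, 5]) := by
    simp [terms, ιMulti_apply, gen, mul_assoc, Matrix.vecTail, Function.comp_def]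
  have hpow : terms.sum ^ 4 = 24 • terms.prod := List.sum_pow_length_eq_factorial_smul_prod
    (by simp [terms, gen, commute_ι_mul_ι]) (by simp [terms, gen, ι_mul_ι_mul_self])
  rw [hsum, hpow, hprod, smul_neg, neg_ne_zero, ← Nat.cast_smul_eq_nsmul ℝ]
  refine smul_ne_zero (by norm_num) (ιMulti_ne_zero_of_linearIndependent ?_)
  exact (Pi.basisFun ℝ (Fin 8)).linearIndependent.comp _ (by decide)

/-- For any differential d (an ℝ-linear map satisfying the graded Leibniz rule
on degree-1 elements) with dαᵢ = dβᵢ = dγᵢ = 0,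
dη₁ = −β₁γ₁ + β₂γ₁ + β₁γ₂ + 2β₂γ₂, dη₂ = 2β₁γ₁ + β₂γ₁ + β₁γ₂ − β₂γ₂,
the element ω = α₁α₂ + η₂β₁ − η₁β₂ + γ₁γ₂ satisfies dω = 0 and ω⁴ ≠ 0. -/
theorem stmt_15
    (d : ExteriorAlgebra ℝ (Fin 8 → ℝ) →ₗ[ℝ] ExteriorAlgebra ℝ (Fin 8 → ℝ))
    (hLeib : ∀ (v : Fin 8 → ℝ) (y : ExteriorAlgebra ℝ (Fin 8 → ℝ)),
      d (ExteriorAlgebra.ι ℝ v * y)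
        = d (ExteriorAlgebra.ι ℝ v) * y - ExteriorAlgebra.ι ℝ v * d y)
    (hdα₁ : d (gen 0) = 0) (hdα₂ : d (gen 1) = 0)
    (hdβ₁ : d (gen 2) = 0) (hdβ₂ : d (gen 3) = 0)
    (hdγ₁ : d (gen 4) = 0) (hdγ₂ : d (gen 5) = 0)
    (hdη₁ : d (gen 6)
      = -(gen 2 * gen 4) + gen 3 * gen 4 + gen 2 * gen 5 + 2 • (gen 3 * gen 5))
    (hdη₂ : d (gen 7)
      = 2 • (gen 2 * gen 4) + gen 3 * gen 4 + gen 2 * gen 5 - gen 3 * gen 5) :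
    d (gen 0 * gen 1 + gen 7 * gen 2 - gen 6 * gen 3 + gen 4 * gen 5) = 0 ∧
    (gen 0 * gen 1 + gen 7 * gen 2 - gen 6 * gen 3 + gen 4 * gen 5) ^ 4 ≠ 0 := by
  refine ⟨?_, omega_pow_four_ne_zero⟩
  have hcancel : d (gen 7) * gen 2 = d (gen 6) * gen 3 := by
    simp only [hdη₁, hdη₂, add_mul, sub_mul, neg_mul, smul_mul_assoc, gen_mul_gen_mul_gen_self,
      smul_zero, add_zero, zero_add]
    rw [gen_mul_gen_mul_gen_rev 3 4 2, gen_mul_gen_mul_gen_rev 3 5 2]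
    abel
  have hLeib₂ (i j : Fin 8) : d (gen i * gen j) = d (gen i) * gen j - gen i * d (gen j) :=
    hLeib _ _
  simp only [map_add, map_sub, hLeib₂, hdα₁, hdα₂, hdβ₁, hdβ₂, hdγ₁, hdγ₂, hcancel, zero_mul,
    mul_zero, sub_zero, zero_add, sub_self]
end

section
/- In the same differential graded algebra, let ρ* be the algebra automorphism determined by ρ*(α₁) = −α₁−α₂, ρ*(α₂) = α₁, and similarly for the pairs (β₁,β₂), (γ₁,γ₂), (η₁,η₂). Then ρ* commutes with d (i.e., ρ*(dηᵢ) = d(ρ*ηᵢ) for i = 1,2) and ρ*(ω) = ω, where ω = α₁α₂ + η₂β₁ − η₁β₂ + γ₁γ₂. -/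
/-- If r is the algebra endomorphism with r(α₁) = −α₁−α₂, r(α₂) = α₁ and
similarly on the pairs (β₁,β₂), (γ₁,γ₂), (η₁,η₂), then r commutes with d on
the η's, and r(ω) = ω for ω = α₁α₂ + η₂β₁ − η₁β₂ + γ₁γ₂. -/
theorem stmt_16
    (d : ExteriorAlgebra ℝ (Fin 8 → ℝ) →ₗ[ℝ] ExteriorAlgebra ℝ (Fin 8 → ℝ))
    (hLeib : ∀ (v : Fin 8 → ℝ) (y : ExteriorAlgebra ℝ (Fin 8 → ℝ)),
      d (ExteriorAlgebra.ι ℝ v * y)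
        = d (ExteriorAlgebra.ι ℝ v) * y - ExteriorAlgebra.ι ℝ v * d y)
    (hdα₁ : d (gen 0) = 0) (hdα₂ : d (gen 1) = 0)
    (hdβ₁ : d (gen 2) = 0) (hdβ₂ : d (gen 3) = 0)
    (hdγ₁ : d (gen 4) = 0) (hdγ₂ : d (gen 5) = 0)
    (hdη₁ : d (gen 6)
      = -(gen 2 * gen 4) + gen 3 * gen 4 + gen 2 * gen 5 + 2 • (gen 3 * gen 5))
    (hdη₂ : d (gen 7)
      = 2 • (gen 2 * gen 4) + gen 3 * gen 4 + gen 2 * gen 5 - gen 3 * gen 5)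
    (r : ExteriorAlgebra ℝ (Fin 8 → ℝ) →ₐ[ℝ] ExteriorAlgebra ℝ (Fin 8 → ℝ))
    (hr0 : r (gen 0) = -gen 0 - gen 1) (hr1 : r (gen 1) = gen 0)
    (hr2 : r (gen 2) = -gen 2 - gen 3) (hr3 : r (gen 3) = gen 2)
    (hr4 : r (gen 4) = -gen 4 - gen 5) (hr5 : r (gen 5) = gen 4)
    (hr6 : r (gen 6) = -gen 6 - gen 7) (hr7 : r (gen 7) = gen 6) :
    r (d (gen 6)) = d (r (gen 6)) ∧
    r (d (gen 7)) = d (r (gen 7)) ∧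
    r (gen 0 * gen 1 + gen 7 * gen 2 - gen 6 * gen 3 + gen 4 * gen 5)
      = gen 0 * gen 1 + gen 7 * gen 2 - gen 6 * gen 3 + gen 4 * gen 5 := by
  have hsq : ∀ i : Fin 8, gen i * gen i = 0 := fun i => ExteriorAlgebra.ι_sq_zero _
  have hsw : ∀ i j : Fin 8, gen j * gen i = -(gen i * gen j) := fun i j =>
    eq_neg_of_add_eq_zero_left (ExteriorAlgebra.ι_add_mul_swap _ _)
  refine ⟨?_, ?_, ?_⟩
  · rw [hdη₁, hr6]
    simp only [map_add, map_neg, map_sub, map_mul, map_smul, hr2, hr3, hr4, hr5,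
      smul_eq_mul, two_smul]
    rw [hdη₁, hdη₂]
    noncomm_ring
  · rw [hdη₂, hr7]
    simp only [map_add, map_neg, map_sub, map_mul, map_smul, hr2, hr3, hr4, hr5,
      smul_eq_mul, two_smul]
    rw [hdη₁]
    noncomm_ring
  · simp only [map_add, map_sub, map_mul, hr0, hr1, hr2, hr3, hr4, hr5, hr6, hr7]
    have h10 : gen 1 * gen 0 = -(gen 0 * gen 1) := hsw 0 1
    have h54 : gen 5 * gen 4 = -(gen 4 * gen 5) := hsw 4 5
    simp only [sub_mul, mul_sub, neg_mul, mul_neg, neg_neg, hsq 0, hsq 4, h10, h54]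
    noncomm_ring
end

section
/- In the free graded-commutative algebra ⋀(α₁,α₂,β₁,β₂,γ₁,γ₂,η₁,η₂) with the differential d above, the 3-forms ξ = −(1/6)(γ₁(β₁η₂ + β₂η₂ + β₂η₁) + γ₂(β₁η₂ + β₁η₁ + β₂η₁)) and ς = (1/3)(−α₁(η₂β₁ + η₁β₁ + η₁β₂) + α₂(η₂β₂ − η₁β₁)) satisfy dξ = γ₁γ₂β₁β₂ and dς = β₁β₂(α₁γ₁ + α₂γ₁ + α₂γ₂). -/
lemma gsq (i : Fin 8) : gen i * gen i = 0 := ExteriorAlgebra.ι_sq_zero _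

lemma ganti (i j : Fin 8) : gen i * gen j = -(gen j * gen i) := by
  have h := ExteriorAlgebra.ι_sq_zero (R := ℝ)
    ((Pi.single i 1 + Pi.single j 1 : Fin 8 → ℝ))
  rw [map_add, add_mul, mul_add, mul_add] at h
  rw [show ExteriorAlgebra.ι ℝ (Pi.single i (1:ℝ)) = gen i from rfl,
      show ExteriorAlgebra.ι ℝ (Pi.single j (1:ℝ)) = gen j from rfl, gsq, gsq] at h
  have h2 : gen i * gen j + gen j * gen i = 0 := by
    rw [zero_add, add_zero] at h; exact h
  exact eq_neg_of_add_eq_zero_left h2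

lemma gswap (i j : Fin 8) (_h : (j:ℕ) < (i:ℕ)) : gen i * gen j = -(gen j * gen i) :=
  ganti i j

lemma gswap' (i j : Fin 8) (x : ExteriorAlgebra ℝ (Fin 8 → ℝ)) (_h : (j:ℕ) < (i:ℕ)) :
    gen i * (gen j * x) = -(gen j * (gen i * x)) := by
  rw [← mul_assoc, ganti i j, neg_mul, mul_assoc]

lemma gsq' (i : Fin 8) (x : ExteriorAlgebra ℝ (Fin 8 → ℝ)) : gen i * (gen i * x) = 0 := by
  rw [← mul_assoc, gsq, zero_mul]

set_option maxHeartbeats 2000000 in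

/-- The 3-forms ξ = −(1/6)(γ₁(β₁η₂ + β₂η₂ + β₂η₁) + γ₂(β₁η₂ + β₁η₁ + β₂η₁))
and ς = (1/3)(−α₁(η₂β₁ + η₁β₁ + η₁β₂) + α₂(η₂β₂ − η₁β₁)) satisfy
dξ = γ₁γ₂β₁β₂ and dς = β₁β₂(α₁γ₁ + α₂γ₁ + α₂γ₂). -/
theorem stmt_17
    (d : ExteriorAlgebra ℝ (Fin 8 → ℝ) →ₗ[ℝ] ExteriorAlgebra ℝ (Fin 8 → ℝ))
    (hLeib : ∀ (v : Fin 8 → ℝ) (y : ExteriorAlgebra ℝ (Fin 8 → ℝ)),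
      d (ExteriorAlgebra.ι ℝ v * y)
        = d (ExteriorAlgebra.ι ℝ v) * y - ExteriorAlgebra.ι ℝ v * d y)
    (hdα₁ : d (gen 0) = 0) (hdα₂ : d (gen 1) = 0)
    (hdβ₁ : d (gen 2) = 0) (hdβ₂ : d (gen 3) = 0)
    (hdγ₁ : d (gen 4) = 0) (hdγ₂ : d (gen 5) = 0)
    (hdη₁ : d (gen 6)
      = -(gen 2 * gen 4) + gen 3 * gen 4 + gen 2 * gen 5 + 2 • (gen 3 * gen 5))
    (hdη₂ : d (gen 7)
      = 2 • (gen 2 * gen 4) + gen 3 * gen 4 + gen 2 * gen 5 - gen 3 * gen 5) :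
    d ((-(1/6) : ℝ) •
        (gen 4 * (gen 2 * gen 7 + gen 3 * gen 7 + gen 3 * gen 6)
          + gen 5 * (gen 2 * gen 7 + gen 2 * gen 6 + gen 3 * gen 6)))
      = gen 4 * gen 5 * (gen 2 * gen 3) ∧
    d ((1/3 : ℝ) •
        (-(gen 0 * (gen 7 * gen 2 + gen 6 * gen 2 + gen 6 * gen 3))
          + gen 1 * (gen 7 * gen 3 - gen 6 * gen 2)))
      = gen 2 * gen 3 * (gen 0 * gen 4 + gen 1 * gen 4 + gen 1 * gen 5) := by
  have dmul : ∀ (i : Fin 8) (y : ExteriorAlgebra ℝ (Fin 8 → ℝ)),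
      d (gen i * y) = d (gen i) * y - gen i * d y := fun i y => hLeib (Pi.single i 1) y
  constructor <;>
  · rw [map_smul]
    simp only [map_add, map_neg, map_sub, dmul, hdα₁, hdα₂, hdβ₁, hdβ₂, hdγ₁, hdγ₂, hdη₁, hdη₂]
    simp (config := { decide := true }) only [gswap, gswap', gsq, gsq', mul_assoc, mul_add,
      add_mul, mul_neg, neg_mul, sub_mul, mul_sub, smul_add, smul_neg, smul_sub, zero_mul,
      mul_zero, neg_neg, zero_sub, sub_zero, zero_add, add_zero, neg_zero, two_smul,
      mul_smul_comm, smul_mul_assoc]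
    module
end
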